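/- arXiv:1206.4011 — 6 statements merged into one kernel-verified Lean document; each statement's English description precedes it below -/
import Mathlib

section
/- Let X be a countably infinite linear order. If X has trivial definable closure in the group-theoretic sense (for every finite tuple a, any element fixed by all automorphisms fixing a pointwise is an entry of a), then X has no greatest element, no least element, and is dense; hence X is order-isomorphic to (ℚ, <). -/
/-- Let X be a countably infinite linear order with trivial
group-theoretic definable closure (for every finite tuple `a`, any element fixed
by all automorphisms fixing `a` pointwise is an entry of `a`). Then X has no
greatest element, no least element, and is dense; hence X is order-isomorphic
to (ℚ, <). -/
theorem stmt2 (X : Type) [LinearOrder X] [Countable X] [Infinite X]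
    (htriv : ∀ (a : List X) (b : X),
      (∀ g : X ≃o X, (∀ x ∈ a, g x = x) → g b = b) → b ∈ a) :
    (¬ ∃ m : X, ∀ x : X, x ≤ m) ∧
    (¬ ∃ m : X, ∀ x : X, m ≤ x) ∧
    (∀ a b : X, a < b → ∃ c : X, a < c ∧ c < b) ∧
    Nonempty (X ≃o ℚ) := by
  have hmax : ¬ ∃ m : X, ∀ x : X, x ≤ m := by
    rintro ⟨m, hm⟩
    have : m ∈ ([] : List X) := by
      apply htriv
      intro g _
      exact le_antisymm (hm _) (by
        calc m = g (g.symm m) := (g.apply_symm_apply m).symm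
        _ ≤ g m := g.monotone (hm _))
    simp at this
  have hmin : ¬ ∃ m : X, ∀ x : X, m ≤ x := by
    rintro ⟨m, hm⟩
    have : m ∈ ([] : List X) := by
      apply htriv
      intro g _
      exact le_antisymm (by
        calc g m ≤ g (g.symm m) := g.monotone (hm _)
        _ = m := g.apply_symm_apply m) (hm _)
    simp at this
  have hdense : ∀ a b : X, a < b → ∃ c : X, a < c ∧ c < b := by
    intro a b hab
    by_contra h
    push_neg at h
    -- b is the least element greater than a
    have hleast : ∀ x : X, a < x → b ≤ x := h
    have : b ∈ [a] := by
      apply htriv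
      intro g hg
      have ha : g a = a := hg a (by simp)
      have h1 : a < g b := by
        have := g.strictMono hab
        rwa [ha] at this
      have h2 : g b ≤ b := by
        apply le_of_not_gt
        intro hbg
        have : a < g.symm b := by
          rw [← g.lt_iff_lt, ha, g.apply_symm_apply]; exact hab
        have hb := hleast _ this
        have := g.monotone hb
        rw [g.apply_symm_apply] at this
        exact absurd this (not_le.mpr hbg)
      exact le_antisymm h2 (hleast _ h1)
    simp at this
    exact absurd this.symm (ne_of_lt hab)
  refine ⟨hmax, hmin, hdense, ?_⟩
  have : NoMaxOrder X := ⟨fun a => by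
    by_contra h; push_neg at h; exact hmax ⟨a, h⟩⟩
  have : NoMinOrder X := ⟨fun a => by
    by_contra h; push_neg at h; exact hmin ⟨a, h⟩⟩
  have : DenselyOrdered X := ⟨fun a b hab => hdense a b hab⟩
  exact Order.iso_of_countable_dense X ℚ
end

section
/- A structure M has trivial group-theoretic algebraic closure if and only if it has trivial group-theoretic definable closure. -/
set_option linter.unnecessarySimpa false


open FirstOrder

/-- A structure M has trivial group-theoretic algebraic closure if and
only if it has trivial group-theoretic definable closure.  Here, for a finite tuple
`a`, `dcl(a)` consists of the elements whose orbit under the pointwise stabilizer of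
`a` in Aut(M) is a singleton, and `acl(a)` of those whose orbit is finite. -/
theorem stmt3 (L : Language) (M : Type) [L.Structure M] :
    (∀ (a : List M) (b : M),
        ({c : M | ∃ g : M ≃[L] M, (∀ x ∈ a, g x = x) ∧ g b = c} : Set M).Finite → b ∈ a)
    ↔
    (∀ (a : List M) (b : M),
        (∀ g : M ≃[L] M, (∀ x ∈ a, g x = x) → g b = b) → b ∈ a) := by
  constructor
  · intro hacl a b hdcl
    apply hacl a b
    apply Set.Finite.subset (Set.finite_singleton b)
    rintro c ⟨g, hg, rfl⟩
    simp [hdcl g hg]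
  · intro hdcl a b hfin
    set S : Set M := {c : M | ∃ g : M ≃[L] M, (∀ x ∈ a, g x = x) ∧ g b = c} with hS
    -- orbit is closed under the stabilizer
    have hclosed : ∀ (g : M ≃[L] M), (∀ x ∈ a, g x = x) → ∀ c ∈ S, g c ∈ S := by
      rintro g hg c ⟨g1, hg1, rfl⟩
      exact ⟨g.comp g1, fun x hx => by simp [Language.Equiv.comp_apply, hg1 x hx, hg x hx], rfl⟩
    have hfin' : (S \ {b}).Finite := hfin.subset Set.diff_subset
    have key := hdcl (a ++ hfin'.toFinset.toList) b
    have hb : b ∈ a ++ hfin'.toFinset.toList := by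
      apply key
      intro g hg
      have hga : ∀ x ∈ a, g x = x := fun x hx => hg x (List.mem_append_left _ hx)
      have hgS : ∀ c ∈ S \ {b}, g c = c := by
        intro c hc
        exact hg c (List.mem_append_right _ (by simp [hc]))
      have hbS : b ∈ S := ⟨Language.Equiv.refl L M, fun x _ => rfl, rfl⟩
      have hgbS : g b ∈ S := hclosed g hga b ⟨Language.Equiv.refl L M, fun x _ => rfl, rfl⟩
      by_contra hne
      have hmem : g b ∈ S \ {b} := ⟨hgbS, by simpa using hne⟩
      have := hgS (g b) hmem
      exact hne (g.injective this)
    rcases List.mem_append.mp hb with h | h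
    · exact h
    · exfalso
      have hb' : b ∈ S \ {b} := by simpa using h
      simp at hb'
end

section
/- A countably infinite equivalence relation structure (a set with a single equivalence relation) has trivial group-theoretic definable closure if and only if every finite equivalence class is a singleton and either every class is infinite or there are infinitely many singleton classes. Equivalently: it has trivial dcl iff it has no finite class of size ≥ 2 and does not have a nonzero finite number of singleton classes. -/
lemma swap_pres_of_rel {M : Type} [DecidableEq M] {E : M → M → Prop} (hE : Equivalence E)
    {b b' : M} (hbb' : E b b') :
    ∀ x y : M, E (Equiv.swap b b' x) (Equiv.swap b b' y) ↔ E x y := by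
  classical
  have key : ∀ x : M, E (Equiv.swap b b' x) x := by
    intro x
    rcases eq_or_ne x b with rfl | hxb
    · rw [Equiv.swap_apply_left]; exact hE.symm hbb'
    rcases eq_or_ne x b' with rfl | hxb'
    · rw [Equiv.swap_apply_right]; exact hbb'
    · rw [Equiv.swap_apply_of_ne_of_ne hxb hxb']; exact hE.refl x
  intro x y
  constructor
  · intro h
    exact hE.trans (hE.trans (hE.symm (key x)) h) (key y)
  · intro h
    exact hE.trans (hE.trans (key x) h) (hE.symm (key y))

lemma swap_pres_of_singletons {M : Type} [DecidableEq M] {E : M → M → Prop} (hE : Equivalence E)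
    {b b' : M} (hb : ∀ c, E b c → c = b) (hb' : ∀ c, E b' c → c = b') :
    ∀ x y : M, E (Equiv.swap b b' x) (Equiv.swap b b' y) ↔ E x y := by
  classical
  have fwd : ∀ x y : M, E x y → E (Equiv.swap b b' x) (Equiv.swap b b' y) := by
    intro x y hxy
    rcases eq_or_ne x b with rfl | hxb
    · have : y = x := hb y hxy
      subst this; exact hE.refl _
    rcases eq_or_ne x b' with rfl | hxb'
    · have : y = x := hb' y hxy
      subst this; exact hE.refl _
    have hyb : y ≠ b := by
      rintro rfl; exact hxb (hb x (hE.symm hxy))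
    have hyb' : y ≠ b' := by
      rintro rfl; exact hxb' (hb' x (hE.symm hxy))
    rw [Equiv.swap_apply_of_ne_of_ne hxb hxb', Equiv.swap_apply_of_ne_of_ne hyb hyb']
    exact hxy
  intro x y
  constructor
  · intro h
    have := fwd _ _ h
    simpa [Equiv.swap_apply_self] using this
  · exact fwd x y

/-- A countably infinite equivalence relation structure (a set with a
single equivalence relation E) has trivial group-theoretic definable closure if and
only if every finite equivalence class is a singleton and it is not the case that
the singleton classes form a nonzero finite family.  Automorphisms are bijections
preserving E. -/
theorem stmt7 (M : Type) [Countable M] [Infinite M]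
    (E : M → M → Prop) (hE : Equivalence E) :
    (∀ (a : List M) (b : M),
      (∀ g : M ≃ M, (∀ x y : M, E (g x) (g y) ↔ E x y) → (∀ x ∈ a, g x = x) → g b = b)
        → b ∈ a)
    ↔
    ((∀ a : M, ({b : M | E a b} : Set M).Finite → ∀ b : M, E a b → b = a) ∧
      ¬ (({a : M | ∀ b : M, E a b → b = a} : Set M).Finite ∧
          ({a : M | ∀ b : M, E a b → b = a} : Set M).Nonempty)) := by
  classical
  constructor
  · intro H
    constructor
    · intro a hfin b hab
      by_contra hne
      have ha : a ∈ hfin.toFinset.erase b := by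
        simp only [Finset.mem_erase, Set.Finite.mem_toFinset, Set.mem_setOf_eq]
        exact ⟨Ne.symm hne, hE.refl a⟩
      have key : b ∈ (hfin.toFinset.erase b).toList := by
        apply H
        intro g hg hfixes
        have hga : g a = a := hfixes a (by simpa [Finset.mem_toList] using ha)
        have hgb : E a (g b) := by
          have h1 : E (g a) (g b) := (hg a b).mpr hab
          rwa [hga] at h1
        by_cases h : g b = b
        · exact h
        · have hmem : g b ∈ hfin.toFinset.erase b := by
            simp only [Finset.mem_erase, Set.Finite.mem_toFinset, Set.mem_setOf_eq]
            exact ⟨h, hgb⟩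
          exact g.injective (hfixes (g b) (by simpa [Finset.mem_toList] using hmem))
      rw [Finset.mem_toList, Finset.mem_erase] at key
      exact key.1 rfl
    · rintro ⟨hfin, c, hc⟩
      simp only [Set.mem_setOf_eq] at hc
      have key : c ∈ (hfin.toFinset.erase c).toList := by
        apply H
        intro g hg hfixes
        have hgc : ∀ b, E (g c) b → b = g c := by
          intro b hb
          have h1 : E (g c) (g (g.symm b)) := by rwa [g.apply_symm_apply]
          have h2 : E c (g.symm b) := (hg c (g.symm b)).mp h1
          have h3 : g.symm b = c := hc _ h2
          have := congrArg g h3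
          rwa [g.apply_symm_apply] at this
        by_cases h : g c = c
        · exact h
        · have hmem : g c ∈ hfin.toFinset.erase c := by
            simp only [Finset.mem_erase, Set.Finite.mem_toFinset, Set.mem_setOf_eq]
            exact ⟨h, hgc⟩
          exact g.injective (hfixes (g c) (by simpa [Finset.mem_toList] using hmem))
      rw [Finset.mem_toList, Finset.mem_erase] at key
      exact key.1 rfl
  · rintro ⟨h1, h2⟩ a b hfix
    by_contra hb
    by_cases hinf : ({c : M | E b c} : Set M).Finite
    · -- b's class is finite, hence a singleton; singleton classes are infinite
      have hbS : ∀ c, E b c → c = b := h1 b hinf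
      have hSne : ({a : M | ∀ b : M, E a b → b = a} : Set M).Nonempty := ⟨b, hbS⟩
      have hSinf : ¬ ({a : M | ∀ b : M, E a b → b = a} : Set M).Finite :=
        fun hf => h2 ⟨hf, hSne⟩
      have hdiff : (({a : M | ∀ b : M, E a b → b = a} : Set M) \
          ↑(b :: a).toFinset).Infinite :=
        Set.Infinite.diff hSinf (Finset.finite_toSet _)
      obtain ⟨b', hb'S, hb'mem⟩ := hdiff.nonempty
      simp only [Finset.coe_insert, List.toFinset_cons, Finset.coe_insert,
        Set.mem_insert_iff, List.coe_toFinset, Set.mem_setOf_eq, not_or] at hb'mem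
      have hb'b : b' ≠ b := hb'mem.1
      have hb'a : b' ∉ a := hb'mem.2
      have hpres := swap_pres_of_singletons hE hbS hb'S
      have := hfix (Equiv.swap b b') hpres (by
        intro x hx
        apply Equiv.swap_apply_of_ne_of_ne
        · rintro rfl; exact hb hx
        · rintro rfl; exact hb'a hx)
      rw [Equiv.swap_apply_left] at this
      exact hb'b this
    · -- b's class is infinite
      have hdiff : (({c : M | E b c} : Set M) \ ↑(b :: a).toFinset).Infinite :=
        Set.Infinite.diff hinf (Finset.finite_toSet _)
      obtain ⟨b', hb'E, hb'mem⟩ := hdiff.nonempty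
      simp only [List.toFinset_cons, Finset.coe_insert, Set.mem_insert_iff,
        List.coe_toFinset, Set.mem_setOf_eq, not_or] at hb'mem
      have hb'b : b' ≠ b := hb'mem.1
      have hb'a : b' ∉ a := hb'mem.2
      have hpres := swap_pres_of_rel hE (hb'E : E b b')
      have := hfix (Equiv.swap b b') hpres (by
        intro x hx
        apply Equiv.swap_apply_of_ne_of_ne
        · rintro rfl; exact hb hx
        · rintro rfl; exact hb'a hx)
      rw [Equiv.swap_apply_left] at this
      exact hb'b this
end

section
/- If G is a countably infinite connected graph containing a finite cut-set, then G does not have trivial algebraic closure. -/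
/-- If G is a countably infinite connected graph containing a finite
cut-set (a finite set of vertices whose removal disconnects G), then G does not
have trivial algebraic closure: there are a finite tuple `a` and a vertex `b` not
among the entries of `a` whose orbit under the automorphisms of G fixing `a`
pointwise is finite. -/
theorem stmt9 (V : Type) [Countable V] [Infinite V]
    (G : SimpleGraph V) (hconn : G.Connected)
    (S : Finset V)
    (hcut : ¬ (G.induce ((↑S : Set V)ᶜ)).Preconnected) :
    ¬ (∀ (a : List V) (b : V),
        ({c : V | ∃ g : G ≃g G, (∀ x ∈ a, g x = x) ∧ g b = c} : Set V).Finite → b ∈ a) := by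
  classical
  intro H
  rw [SimpleGraph.Preconnected] at hcut
  push_neg at hcut
  obtain ⟨u, v, huv⟩ := hcut
  -- every walk from ↑u to ↑v in G meets S
  have lift : ∀ {x y : V} (q : G.Walk x y), (∀ z ∈ q.support, z ∈ ((↑S : Set V)ᶜ)) →
      ∀ (hx : x ∈ ((↑S : Set V)ᶜ)) (hy : y ∈ ((↑S : Set V)ᶜ)),
      (G.induce ((↑S : Set V)ᶜ)).Reachable ⟨x, hx⟩ ⟨y, hy⟩ := by
    intro x y q
    induction q with
    | nil => intro _ hx hy; rfl
    | @cons x' y' z' h q ih =>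
      intro hall hx hy
      have hy' : y' ∈ ((↑S : Set V)ᶜ) := hall y' (by simp)
      have h1 : (G.induce ((↑S : Set V)ᶜ)).Adj ⟨x', hx⟩ ⟨y', hy'⟩ := h
      exact h1.reachable.trans (ih (fun z hz => hall z (by simp [hz])) hy' hy)
  have key : ∀ p : G.Walk (↑u) (↑v), ∃ s ∈ S, s ∈ p.support := by
    intro p
    by_contra hc
    push_neg at hc
    have hall : ∀ z ∈ p.support, z ∈ ((↑S : Set V)ᶜ) := by
      intro z hz hzS
      exact hc z hzS hz
    exact huv (by simpa using lift p hall u.2 v.2)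
  -- take a minimal sub-cutset T ⊆ S
  set P : Finset V → Prop := fun T => ∀ p : G.Walk (↑u) (↑v), ∃ s ∈ T, s ∈ p.support with hP
  have hSmem : S ∈ S.powerset.filter P := by
    simp [Finset.mem_filter, Finset.mem_powerset]
    exact key
  obtain ⟨T, hTmem, hTmin⟩ := Finset.exists_min_image (S.powerset.filter P)
    Finset.card ⟨S, hSmem⟩
  rw [Finset.mem_filter, Finset.mem_powerset] at hTmem
  obtain ⟨hTS, hPT⟩ := hTmem
  -- pick s₁ ∈ T
  obtain ⟨pw⟩ := hconn.preconnected (↑u) (↑v)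
  obtain ⟨s₁, hs₁T, -⟩ := hPT pw
  -- minimality: T.erase s₁ does not separate
  have hnotP : ¬ P (T.erase s₁) := by
    intro hPe
    have hmem : T.erase s₁ ∈ S.powerset.filter P := by
      rw [Finset.mem_filter, Finset.mem_powerset]
      exact ⟨(Finset.erase_subset _ _).trans hTS, hPe⟩
    have := hTmin _ hmem
    have hlt : (T.erase s₁).card < T.card := Finset.card_erase_lt_of_mem hs₁T
    omega
  rw [hP] at hnotP
  obtain ⟨p₀, hp₀⟩ := not_forall.mp hnotP
  push_neg at hp₀
  -- the witness tuple and vertex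
  set a : List V := (↑u : V) :: (↑v : V) :: (T.erase s₁).toList with ha
  -- orbit of s₁ over a is contained in the support of p₀
  have horb : ({c : V | ∃ g : G ≃g G, (∀ x ∈ a, g x = x) ∧ g s₁ = c} : Set V) ⊆
      {x | x ∈ p₀.support} := by
    rintro c ⟨g, hfix, rfl⟩
    have hgu : g ↑u = ↑u := hfix _ (by simp [ha])
    have hgv : g ↑v = ↑v := hfix _ (by simp [ha])
    have hfixT : ∀ s ∈ T.erase s₁, g s = s := by
      intro s hs
      exact hfix s (by simp [ha, Finset.mem_toList.mpr hs])
    have hsu : g.symm ↑u = ↑u := by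
      conv_lhs => rw [← hgu]
      exact g.symm_apply_apply _
    have hsv : g.symm ↑v = ↑v := by
      conv_lhs => rw [← hgv]
      exact g.symm_apply_apply _
    -- pull back p₀ by g.symm
    have q : G.Walk (↑u) (↑v) := (p₀.map g.symm.toHom).copy hsu hsv
    obtain ⟨s, hsT, hsq⟩ := hPT ((p₀.map g.symm.toHom).copy hsu hsv)
    rw [SimpleGraph.Walk.support_copy, SimpleGraph.Walk.support_map] at hsq
    obtain ⟨y, hy, hys⟩ := List.mem_map.mp hsq
    -- hys : g.symm y = s
    have hygs : y = g s := by
      rw [← hys]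
      exact (g.apply_symm_apply y).symm
    by_cases hss : s = s₁
    · rw [hss] at hygs
      rw [← hygs]
      exact hy
    · have hsmem : s ∈ T.erase s₁ := Finset.mem_erase.mpr ⟨hss, hsT⟩
      have : g s = s := hfixT s hsmem
      rw [this] at hygs
      subst hygs
      exact absurd hy (hp₀ y hsmem)
  have hfin : ({c : V | ∃ g : G ≃g G, (∀ x ∈ a, g x = x) ∧ g s₁ = c} : Set V).Finite :=
    Set.Finite.subset (p₀.support.toFinset.finite_toSet) (by simpa using horb)
  have hmem := H a s₁ hfin
  -- but s₁ ∉ a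
  have hs₁S : s₁ ∈ S := hTS hs₁T
  have huS : (↑u : V) ∉ S := u.2
  have hvS : (↑v : V) ∉ S := v.2
  simp only [ha, List.mem_cons] at hmem
  rcases hmem with h | h | h
  · exact huS (h ▸ hs₁S)
  · exact hvS (h ▸ hs₁S)
  · exact (Finset.notMem_erase s₁ T) (Finset.mem_toList.mp h)
end

section
/- Let P be a Borel L-structure on ℝ (all relations Borel), m a probability measure on ℝ, and μ = m^∞ ∘ F_P^{-1} the pushforward of the product measure on ℝ^ω under the sampling map F_P. Then μ is invariant under the logic action of Sym(ℕ) on S_L: for every Borel X ⊆ S_L and g ∈ Sym(ℕ), μ(g·X) = μ(X). -/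
open MeasureTheory

/-- The boxes (cylinder sets with measurable sides) in `ℕ → ℝ`. -/
def stmt16Boxes : Set (Set (ℕ → ℝ)) :=
  {B | ∃ (s : Finset ℕ) (f : ℕ → Set ℝ), (∀ i, MeasurableSet (f i)) ∧
    B = {a : ℕ → ℝ | ∀ i ∈ s, a i ∈ f i}}

lemma stmt16Boxes_pi : IsPiSystem stmt16Boxes := by
  rintro _ ⟨s₁, f₁, hf₁, rfl⟩ _ ⟨s₂, f₂, hf₂, rfl⟩ -
  refine ⟨s₁ ∪ s₂, fun i => (if i ∈ s₁ then f₁ i else Set.univ) ∩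
      (if i ∈ s₂ then f₂ i else Set.univ), fun i => ?_, ?_⟩
  · exact MeasurableSet.inter (by split <;> simp [hf₁ i]) (by split <;> simp [hf₂ i])
  · ext a
    simp only [Set.mem_inter_iff, Set.mem_setOf_eq, Finset.mem_union]
    constructor
    · rintro ⟨h1, h2⟩ i hi
      constructor
      · split
        · exact h1 i ‹_›
        · trivial
      · split
        · exact h2 i ‹_›
        · trivial
    · intro h
      constructor
      · intro i hi
        have := (h i (Or.inl hi)).1
        simpa [hi] using this
      · intro i hi
        have := (h i (Or.inr hi)).2
        simpa [hi] using this

lemma stmt16Boxes_measurableSet {B : Set (ℕ → ℝ)} (hB : B ∈ stmt16Boxes) :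
    MeasurableSet B := by
  obtain ⟨s, f, hf, rfl⟩ := hB
  have : {a : ℕ → ℝ | ∀ i ∈ s, a i ∈ f i} = ⋂ i ∈ s, (fun a : ℕ → ℝ => a i) ⁻¹' f i := by
    ext a; simp
  rw [this]
  exact MeasurableSet.biInter s.countable_toSet (fun i _ => (measurable_pi_apply i) (hf i))

lemma stmt16Boxes_generate :
    (MeasurableSpace.pi : MeasurableSpace (ℕ → ℝ)) =
      MeasurableSpace.generateFrom stmt16Boxes := by
  apply le_antisymm
  · rw [MeasurableSpace.pi_eq_generateFrom_projections]
    apply MeasurableSpace.generateFrom_le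
    rintro _ ⟨i, A, hA, rfl⟩
    apply MeasurableSpace.measurableSet_generateFrom
    refine ⟨{i}, fun _ => A, fun _ => hA, ?_⟩
    ext a; simp
  · exact MeasurableSpace.generateFrom_le fun B hB => stmt16Boxes_measurableSet hB

/-- Let P be a Borel structure on ℝ in a relational language
(relation symbols `r : R`, arities `ar r`, Borel interpretations), m a probability
measure on ℝ, and ν = m^∞ the product measure on ℝ^ω (characterized on cylinder
sets).  Then the pushforward μ = ν ∘ F_P⁻¹ of ν under the sampling map F_P is
invariant under the logic action of Sym(ℕ) on the space S_L of structures on ℕ: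
for every measurable X ⊆ S_L and g ∈ Sym(ℕ), μ(g·X) = μ(X), where
(g·M) ⊨ R(n₁,…,n_k) iff M ⊨ R(g⁻¹ n₁,…,g⁻¹ n_k). -/
theorem stmt16 (R : Type) (ar : R → ℕ)
    (interp : ∀ r : R, (Fin (ar r) → ℝ) → Prop)
    (hBorel : ∀ r : R, MeasurableSet {x : Fin (ar r) → ℝ | interp r x})
    (m : Measure ℝ) [IsProbabilityMeasure m]
    (ν : Measure (ℕ → ℝ)) [IsProbabilityMeasure ν]
    (hν : ∀ (s : Finset ℕ) (f : ℕ → Set ℝ), (∀ i, MeasurableSet (f i)) →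
      ν {a : ℕ → ℝ | ∀ i ∈ s, a i ∈ f i} = ∏ i ∈ s, m (f i)) :
    letI 𝓢 : MeasurableSpace (∀ r : R, (Fin (ar r) → ℕ) → Prop) :=
      MeasurableSpace.generateFrom
        {s : Set (∀ r : R, (Fin (ar r) → ℕ) → Prop) |
          ∃ (r : R) (t : Fin (ar r) → ℕ),
            s = {M : ∀ r : R, (Fin (ar r) → ℕ) → Prop | M r t}}
    ∀ (g : Equiv.Perm ℕ) (X : Set (∀ r : R, (Fin (ar r) → ℕ) → Prop)),
      MeasurableSet X →
      Measure.map
          (fun (a : ℕ → ℝ) (r : R) (t : Fin (ar r) → ℕ) => interp r (fun i => a (t i))) ν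
          ((fun (M : ∀ r : R, (Fin (ar r) → ℕ) → Prop) (r : R) (t : Fin (ar r) → ℕ) =>
              M r (fun i => g⁻¹ (t i))) ⁻¹' X)
        =
      Measure.map
          (fun (a : ℕ → ℝ) (r : R) (t : Fin (ar r) → ℕ) => interp r (fun i => a (t i))) ν
          X := by
  intro g X hX
  set F : (ℕ → ℝ) → ∀ r : R, (Fin (ar r) → ℕ) → Prop :=
    fun a r t => interp r (fun i => a (t i)) with hF_def
  set T : (∀ r : R, (Fin (ar r) → ℕ) → Prop) → ∀ r : R, (Fin (ar r) → ℕ) → Prop :=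
    fun M r t => M r (fun i => g⁻¹ (t i)) with hT_def
  set σf : (ℕ → ℝ) → (ℕ → ℝ) := fun a n => a (g⁻¹ n) with hσ_def
  -- measurability of F
  set S : Set (Set (∀ r : R, (Fin (ar r) → ℕ) → Prop)) :=
    {s : Set (∀ r : R, (Fin (ar r) → ℕ) → Prop) |
      ∃ (r : R) (t : Fin (ar r) → ℕ),
        s = {M : ∀ r : R, (Fin (ar r) → ℕ) → Prop | M r t}} with hS_def
  have hF : @Measurable _ _ _ (MeasurableSpace.generateFrom S) F := by
    apply measurable_generateFrom
    rintro _ ⟨r, t, rfl⟩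
    have hmap : Measurable (fun a : ℕ → ℝ => fun i : Fin (ar r) => a (t i)) :=
      measurable_pi_lambda _ (fun i => measurable_pi_apply _)
    exact hmap (hBorel r)
  -- measurability of T
  have hT : @Measurable _ _ (MeasurableSpace.generateFrom S)
      (MeasurableSpace.generateFrom S) T := by
    refine @measurable_generateFrom _ _ (MeasurableSpace.generateFrom S) _ _ ?_
    rintro _ ⟨r, t, rfl⟩
    exact MeasurableSpace.measurableSet_generateFrom ⟨r, fun i => g⁻¹ (t i), rfl⟩
  -- measurability of σf
  have hσ : Measurable σf :=
    measurable_pi_lambda _ (fun n => measurable_pi_apply _)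
  -- ν is invariant under σf
  have hinv : Measure.map σf ν = ν := by
    have : IsProbabilityMeasure (Measure.map σf ν) := Measure.isProbabilityMeasure_map hσ.aemeasurable
    refine ext_of_generate_finite stmt16Boxes stmt16Boxes_generate stmt16Boxes_pi ?_ (by simp)
    rintro _ ⟨s, f, hf, rfl⟩
    rw [Measure.map_apply hσ]
    · have hpre : σf ⁻¹' {a : ℕ → ℝ | ∀ i ∈ s, a i ∈ f i}
          = {a : ℕ → ℝ | ∀ j ∈ s.image (⇑g⁻¹), a j ∈ f (g j)} := by
        ext a
        simp only [Set.mem_preimage, Set.mem_setOf_eq, Finset.mem_image, hσ_def]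
        constructor
        · rintro h j ⟨i, hi, rfl⟩
          simpa using h i hi
        · intro h i hi
          have := h (g⁻¹ i) ⟨i, hi, rfl⟩
          simpa using this
      rw [hpre, hν _ _ (fun j => hf (g j)), hν s f hf]
      rw [Finset.prod_image (fun x _ y _ h => g⁻¹.injective h)]
      simp
    · exact stmt16Boxes_measurableSet ⟨s, f, hf, rfl⟩
  -- T ∘ F = F ∘ σf
  have hcomm : T ∘ F = F ∘ σf := rfl
  rw [Measure.map_apply hF (hT hX), Measure.map_apply hF hX]

  have : F ⁻¹' (T ⁻¹' X) = σf ⁻¹' (F ⁻¹' X) := by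
    rw [← Set.preimage_comp, ← Set.preimage_comp, hcomm]
  rw [this, ← Measure.map_apply hσ (hF hX), hinv]
end

section
/- Let M ∈ S_L be a countably infinite structure with an element b and finite tuple a (with distinct entries, b not among them) such that b is fixed by every automorphism of M fixing a pointwise. Suppose μ is a Sym(ℕ)-invariant probability measure on S_L concentrated on the isomorphism class of M. Then, writing α > 0 for the common measure of the events 'the tuple (0,…,j) realizes the L_{ω₁,ω}-type of a' and β > 0 for the common measure of the events 'the tuple (0,…,j,k) realizes the type of (a,b)' for each k > j, the events for distinct k > j are pairwise disjoint and their union has measure α, forcing α = Σ_{k>j} β, a contradiction. Hence no such invariant measure exists. -/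
open MeasureTheory

namespace Stmt17
open MeasureTheory

variable {R : Type} {ar : R → ℕ}

abbrev SL (R : Type) (ar : R → ℕ) := ∀ r : R, (Fin (ar r) → ℕ) → Prop

def qfE (M N : SL R ar) (n : ℕ) (t s : ℕ → ℕ) : Prop :=
  (∀ i, i < n → ∀ i', i' < n → (t i = t i' ↔ s i = s i')) ∧
  ∀ (r : R) (u : Fin (ar r) → ℕ), (∀ i, u i < n) →
    (N r (fun i => t (u i)) ↔ M r (fun i => s (u i)))

def E (M : SL R ar) (γ : Ordinal) (N : SL R ar) (n : ℕ) (t s : ℕ → ℕ) : Prop :=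
  qfE M N n t s ∧ ∀ γ' < γ,
    (∀ x, ∃ y, E M γ' N (n+1) (Function.update t n x) (Function.update s n y)) ∧
    (∀ y, ∃ x, E M γ' N (n+1) (Function.update t n x) (Function.update s n y))
termination_by γ
decreasing_by all_goals assumption

variable {M N : SL R ar}

theorem E_def {γ : Ordinal} {n : ℕ} {t s : ℕ → ℕ} :
    E M γ N n t s ↔ (qfE M N n t s ∧ ∀ γ' < γ,
    (∀ x, ∃ y, E M γ' N (n+1) (Function.update t n x) (Function.update s n y)) ∧
    (∀ y, ∃ x, E M γ' N (n+1) (Function.update t n x) (Function.update s n y))) := by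
  conv_lhs => rw [E]

theorem E.qf {γ : Ordinal} {n : ℕ} {t s : ℕ → ℕ} (h : E M γ N n t s) : qfE M N n t s :=
  (E_def.1 h).1

theorem E.ext {γ γ' : Ordinal} (hγ : γ' < γ) {n : ℕ} {t s : ℕ → ℕ} (h : E M γ N n t s) :
    (∀ x, ∃ y, E M γ' N (n+1) (Function.update t n x) (Function.update s n y)) ∧
    (∀ y, ∃ x, E M γ' N (n+1) (Function.update t n x) (Function.update s n y)) :=
  (E_def.1 h).2 γ' hγ

theorem E.mono {γ γ' : Ordinal} (hγ : γ' ≤ γ) {n : ℕ} {t s : ℕ → ℕ} (h : E M γ N n t s) :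
    E M γ' N n t s :=
  E_def.2 ⟨h.qf, fun γ'' hγ'' => (E_def.1 h).2 γ'' (lt_of_lt_of_le hγ'' hγ)⟩

theorem qfE_congr {n : ℕ} {t s t' s' : ℕ → ℕ} (ht : ∀ i, i < n → t i = t' i)
    (hs : ∀ i, i < n → s i = s' i) (h : qfE M N n t s) : qfE M N n t' s' := by
  constructor
  · intro i hi i' hi'
    rw [← ht i hi, ← ht i' hi', ← hs i hi, ← hs i' hi']
    exact h.1 i hi i' hi'
  · intro r u hu
    have h1 : (fun i => t' (u i)) = fun i => t (u i) := funext fun i => (ht _ (hu i)).symm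
    have h2 : (fun i => s' (u i)) = fun i => s (u i) := funext fun i => (hs _ (hu i)).symm
    rw [h1, h2]; exact h.2 r u hu

theorem E_congr {γ : Ordinal} {n : ℕ} {t s t' s' : ℕ → ℕ} (ht : ∀ i, i < n → t i = t' i)
    (hs : ∀ i, i < n → s i = s' i) (h : E M γ N n t s) : E M γ N n t' s' := by
  induction γ using Ordinal.induction generalizing n t s t' s' with
  | _ γ IH =>
    refine E_def.2 ⟨qfE_congr ht hs h.qf, fun γ' hγ' => ?_⟩
    have hupd : ∀ (f f' : ℕ → ℕ), (∀ i, i < n → f i = f' i) → ∀ x i, i < n+1 →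
        Function.update f n x i = Function.update f' n x i := by
      intro f f' hf x i hi
      rcases Nat.lt_succ_iff_lt_or_eq.1 hi with hi | rfl
      · rw [Function.update_of_ne (Nat.ne_of_lt hi), Function.update_of_ne (Nat.ne_of_lt hi)]
        exact hf i hi
      · simp
    constructor
    · intro x
      obtain ⟨y, hy⟩ := (h.ext hγ').1 x
      exact ⟨y, IH γ' hγ' (hupd t t' ht x) (hupd s s' hs y) hy⟩
    · intro y
      obtain ⟨x, hx⟩ := (h.ext hγ').2 y
      exact ⟨x, IH γ' hγ' (hupd t t' ht x) (hupd s s' hs y) hx⟩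

theorem E_refl {γ : Ordinal} {n : ℕ} {t : ℕ → ℕ} : E M γ M n t t := by
  induction γ using Ordinal.induction generalizing n t with
  | _ γ IH =>
    refine E_def.2 ⟨⟨fun i _ i' _ => Iff.rfl, fun r u _ => Iff.rfl⟩, fun γ' hγ' => ?_⟩
    exact ⟨fun x => ⟨x, IH γ' hγ'⟩, fun y => ⟨y, IH γ' hγ'⟩⟩

theorem E_reindex {γ : Ordinal} {n m : ℕ} {t s σ : ℕ → ℕ} (hσ : ∀ i, i < m → σ i < n)
    (h : E M γ N n t s) : E M γ N m (fun i => t (σ i)) (fun i => s (σ i)) := by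
  induction γ using Ordinal.induction generalizing n m t s σ with
  | _ γ IH =>
    refine E_def.2 ⟨?_, fun γ' hγ' => ?_⟩
    · constructor
      · intro i hi i' hi'
        exact h.qf.1 (σ i) (hσ i hi) (σ i') (hσ i' hi')
      · intro r u hu
        exact h.qf.2 r (fun i => σ (u i)) (fun i => hσ _ (hu i))
    · have key : ∀ x y, E M γ' N (n+1) (Function.update t n x) (Function.update s n y) →
          E M γ' N (m+1) (Function.update (fun i => t (σ i)) m x)
            (Function.update (fun i => s (σ i)) m y) := by
        intro x y hE
        set σ' : ℕ → ℕ := fun i => if i < m then σ i else n with hσ'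
        have hb : ∀ i, i < m + 1 → σ' i < n + 1 := by
          intro i hi
          by_cases him : i < m
          · simp only [hσ', if_pos him]; exact Nat.lt_succ_of_lt (hσ i him)
          · simp [hσ', if_neg him]
        have := IH γ' hγ' hb hE
        refine E_congr ?_ ?_ this
        · intro i hi
          rcases Nat.lt_succ_iff_lt_or_eq.1 hi with hi | rfl
          · have h1 : σ' i = σ i := if_pos hi
            rw [h1, Function.update_of_ne (Nat.ne_of_lt (hσ i hi)),
              Function.update_of_ne (Nat.ne_of_lt hi)]
          · have hn : σ' i = n := if_neg (lt_irrefl i)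
            rw [hn, Function.update_self, Function.update_self]
        · intro i hi
          rcases Nat.lt_succ_iff_lt_or_eq.1 hi with hi | rfl
          · have h1 : σ' i = σ i := if_pos hi
            rw [h1, Function.update_of_ne (Nat.ne_of_lt (hσ i hi)),
              Function.update_of_ne (Nat.ne_of_lt hi)]
          · have hn : σ' i = n := if_neg (lt_irrefl i)
            rw [hn, Function.update_self, Function.update_self]
      constructor
      · intro x
        obtain ⟨y, hy⟩ := (h.ext hγ').1 x
        exact ⟨y, key x y hy⟩
      · intro y
        obtain ⟨x, hx⟩ := (h.ext hγ').2 y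
        exact ⟨x, key x y hx⟩

/-- transport along an isomorphism-like permutation on the `N` side -/
theorem E_transport {γ : Ordinal} {N₁ N₂ : SL R ar} (g : Equiv.Perm ℕ)
    (hg : ∀ (r : R) (u : Fin (ar r) → ℕ), N₁ r u ↔ N₂ r (fun i => g (u i)))
    {n : ℕ} {t s : ℕ → ℕ} (h : E M γ N₁ n t s) : E M γ N₂ n (fun i => g (t i)) s := by
  induction γ using Ordinal.induction generalizing n t s with
  | _ γ IH =>
    refine E_def.2 ⟨⟨?_, ?_⟩, fun γ' hγ' => ?_⟩
    · intro i hi i' hi'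
      rw [g.injective.eq_iff]
      exact h.qf.1 i hi i' hi'
    · intro r u hu
      rw [← hg r (fun i => t (u i))]
      exact h.qf.2 r u hu
    · have key : ∀ x y, E M γ' N₁ (n+1) (Function.update t n x) (Function.update s n y) →
          E M γ' N₂ (n+1) (Function.update (fun i => g (t i)) n (g x)) (Function.update s n y) := by
        intro x y hE
        have := IH γ' hγ' hE
        refine E_congr ?_ (fun _ _ => rfl) this
        intro i _
        by_cases hin : i = n
        · subst hin; simp
        · rw [Function.update_of_ne hin, Function.update_of_ne hin]
      constructor
      · intro x
        obtain ⟨y, hy⟩ := (h.ext hγ').1 (g.symm x)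
        refine ⟨y, ?_⟩
        have := key _ y hy
        rwa [g.apply_symm_apply] at this
      · intro y
        obtain ⟨x, hx⟩ := (h.ext hγ').2 y
        exact ⟨g x, key x y hx⟩

theorem E_transport_iff {γ : Ordinal} {N₁ N₂ : SL R ar} (g : Equiv.Perm ℕ)
    (hg : ∀ (r : R) (u : Fin (ar r) → ℕ), N₁ r u ↔ N₂ r (fun i => g (u i)))
    {n : ℕ} {t s : ℕ → ℕ} : E M γ N₁ n t s ↔ E M γ N₂ n (fun i => g (t i)) s := by
  constructor
  · exact E_transport g hg
  · intro h
    have hg' : ∀ (r : R) (u : Fin (ar r) → ℕ), N₂ r u ↔ N₁ r (fun i => g.symm (u i)) := by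
      intro r u
      rw [hg r (fun i => g.symm (u i))]
      simp
    have := E_transport g.symm hg' h
    refine E_congr (fun i _ => ?_) (fun _ _ => rfl) this
    simp


section Meas
open MeasureTheory
variable [Countable R]

def mS (R : Type) (ar : R → ℕ) : MeasurableSpace (SL R ar) :=
  MeasurableSpace.generateFrom
    {s : Set (SL R ar) | ∃ (r : R) (t : Fin (ar r) → ℕ), s = {N : SL R ar | N r t}}

omit [Countable R] in
theorem basic_meas (r : R) (t : Fin (ar r) → ℕ) :
    MeasurableSet[mS R ar] {N : SL R ar | N r t} :=
  MeasurableSpace.measurableSet_generateFrom ⟨r, t, rfl⟩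

theorem qfE_meas (M : SL R ar) (n : ℕ) (t s : ℕ → ℕ) :
    MeasurableSet[mS R ar] {N : SL R ar | qfE M N n t s} := by
  have he : {N : SL R ar | qfE M N n t s} =
      {N : SL R ar | ∀ i, i < n → ∀ i', i' < n → (t i = t i' ↔ s i = s i')} ∩
      ⋂ (p : (r : R) × (Fin (ar r) → ℕ)),
        {N : SL R ar | (∀ i, p.2 i < n) →
          (N p.1 (fun i => t (p.2 i)) ↔ M p.1 (fun i => s (p.2 i)))} := by
    ext N
    simp only [qfE, Set.mem_setOf_eq, Set.mem_inter_iff, Set.mem_iInter, Sigma.forall]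
  rw [he]
  apply MeasurableSet.inter
  · by_cases h : (∀ i, i < n → ∀ i', i' < n → (t i = t i' ↔ s i = s i')) <;> simp [h]
  · refine MeasurableSet.iInter fun p => ?_
    rcases Classical.em (∀ i, p.2 i < n) with hb | hb
    · rcases Classical.em (M p.1 fun i => s (p.2 i)) with hM | hM
      · have h2 : {N : SL R ar | (∀ i, p.2 i < n) →
            (N p.1 (fun i => t (p.2 i)) ↔ M p.1 (fun i => s (p.2 i)))} =
            {N : SL R ar | N p.1 (fun i => t (p.2 i))} := by
          ext N; simp [hb, hM]
        rw [h2]; exact basic_meas _ _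
      · have h2 : {N : SL R ar | (∀ i, p.2 i < n) →
            (N p.1 (fun i => t (p.2 i)) ↔ M p.1 (fun i => s (p.2 i)))} =
            {N : SL R ar | N p.1 (fun i => t (p.2 i))}ᶜ := by
          ext N; simp [hb, hM]
        rw [h2]; exact (basic_meas _ _).compl
    · have h2 : {N : SL R ar | (∀ i, p.2 i < n) →
          (N p.1 (fun i => t (p.2 i)) ↔ M p.1 (fun i => s (p.2 i)))} = Set.univ := by
        ext N; simp [hb]
      rw [h2]; exact MeasurableSet.univ

theorem E_meas (M : SL R ar) {γ : Ordinal} (hγ : (Set.Iio γ).Countable) (n : ℕ) (t s : ℕ → ℕ) :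
    MeasurableSet[mS R ar] {N : SL R ar | E M γ N n t s} := by
  induction γ using Ordinal.induction generalizing n t s with
  | _ γ IH =>
    have he : {N : SL R ar | E M γ N n t s} = {N : SL R ar | qfE M N n t s} ∩
        ⋂ γ' ∈ Set.Iio γ,
          ((⋂ x, ⋃ y, {N : SL R ar | E M γ' N (n+1) (Function.update t n x) (Function.update s n y)}) ∩
           (⋂ y, ⋃ x, {N : SL R ar | E M γ' N (n+1) (Function.update t n x) (Function.update s n y)})) := by
      ext N
      rw [Set.mem_setOf_eq, E_def]
      simp only [Set.mem_inter_iff, Set.mem_iInter, Set.mem_iUnion, Set.mem_setOf_eq,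
        Set.mem_Iio]
    rw [he]
    refine (qfE_meas M n t s).inter (MeasurableSet.biInter hγ fun γ' hγ' => ?_)
    have hc : (Set.Iio γ').Countable :=
      hγ.mono (Set.Iio_subset_Iio (le_of_lt hγ'))
    exact ((MeasurableSet.iInter fun x => MeasurableSet.iUnion fun y => IH γ' hγ' hc _ _ _)).inter
      (MeasurableSet.iInter fun y => MeasurableSet.iUnion fun x => IH γ' hγ' hc _ _ _)

end Meas

universe u

theorem Iio_ctble {γ : Ordinal.{u}} (h : γ < (Cardinal.aleph 1).ord) : (Set.Iio γ).Countable := by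
  rw [Cardinal.countable_iff_lt_aleph_one, Ordinal.mk_Iio_ordinal]
  have h1 : γ.card < Cardinal.aleph 1 := Cardinal.lt_ord.mp h
  calc Cardinal.lift.{u+1} γ.card < Cardinal.lift.{u+1} (Cardinal.aleph 1) := Cardinal.lift_lt.2 h1
    _ = Cardinal.aleph 1 := by rw [Cardinal.lift_aleph, Ordinal.lift_one]

theorem Iio_nctble : ¬ (Set.Iio (Cardinal.aleph 1).ord).Countable := by
  rw [Cardinal.countable_iff_lt_aleph_one, Ordinal.mk_Iio_ordinal, Cardinal.card_ord,
    Cardinal.lift_aleph, Ordinal.lift_one]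
  exact lt_irrefl _

theorem exists_gammaStar (M : SL R ar) :
    ∃ γ : Ordinal, (Set.Iio γ).Countable ∧
      ∀ (n : ℕ) (t s : ℕ → ℕ), E M γ M n t s → E M (γ+1) M n t s := by
  by_contra hcon
  push_neg at hcon
  have hw : ∀ γ : Set.Iio (Cardinal.aleph 1).ord,
      ∃ w : ℕ × List ℕ × List ℕ, ∃ t s : ℕ → ℕ,
        w.2.1 = List.ofFn (fun i : Fin w.1 => t i) ∧ w.2.2 = List.ofFn (fun i : Fin w.1 => s i) ∧
        E M (γ : Ordinal) M w.1 t s ∧ ¬ E M ((γ : Ordinal)+1) M w.1 t s := by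
    rintro ⟨γ, hγ⟩
    obtain ⟨n, t, s, h1, h2⟩ := hcon γ (Iio_ctble hγ)
    exact ⟨(n, List.ofFn fun i : Fin n => t i, List.ofFn fun i : Fin n => s i),
      t, s, rfl, rfl, h1, h2⟩
  choose f hf using hw
  have key : ∀ γ₁ γ₂ : Set.Iio (Cardinal.aleph 1).ord, (γ₁ : Ordinal) < (γ₂ : Ordinal) →
      f γ₁ ≠ f γ₂ := by
    intro γ₁ γ₂ hlt heq
    obtain ⟨t₁, s₁, ht₁, hs₁, hE₁, hnE₁⟩ := hf γ₁
    obtain ⟨t₂, s₂, ht₂, hs₂, hE₂, hnE₂⟩ := hf γ₂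
    have hn : (f γ₁).1 = (f γ₂).1 := by rw [heq]
    set n := (f γ₁).1 with hndef
    have htt : ∀ i, i < n → t₂ i = t₁ i := by
      intro i hi
      have h1 : (f γ₁).2.1 = (f γ₂).2.1 := by rw [heq]
      rw [ht₁, ht₂] at h1
      rw [← hn] at h1
      have h3 := List.ofFn_inj.mp h1
      have := congrFun h3 ⟨i, hi⟩
      simpa using this.symm
    have hss : ∀ i, i < n → s₂ i = s₁ i := by
      intro i hi
      have h1 : (f γ₁).2.2 = (f γ₂).2.2 := by rw [heq]
      rw [hs₁, hs₂] at h1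
      rw [← hn] at h1
      have h3 := List.ofFn_inj.mp h1
      have := congrFun h3 ⟨i, hi⟩
      simpa using this.symm
    have hle : (γ₁ : Ordinal) + 1 ≤ (γ₂ : Ordinal) := by
      rw [Ordinal.add_one_eq_succ, Order.succ_le_iff]; exact hlt
    have hE2' : E M ((γ₁ : Ordinal)+1) M (f γ₂).1 t₂ s₂ := hE₂.mono hle
    rw [← hn] at hE2'
    exact hnE₁ (E_congr htt hss hE2')
  have hinj : Function.Injective f := by
    intro γ₁ γ₂ heq
    by_contra hne
    have hne' : (γ₁ : Ordinal) ≠ (γ₂ : Ordinal) := fun h => hne (Subtype.ext h)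
    rcases lt_or_gt_of_ne hne' with h | h
    · exact key γ₁ γ₂ h heq
    · exact key γ₂ γ₁ h heq.symm
  exact Iio_nctble (Set.countable_coe_iff.mp (Function.Injective.countable hinj))

/-- The back-and-forth / dovetailing construction: if `N` has the
back-and-forth extension property at level `γ` and some pair of tuples is
`E γ`-related, then there is an isomorphism `N → M` extending that pair. -/
theorem dovetail (M N : SL R ar) (γ : Ordinal)
    (hbf : ∀ (n : ℕ) (t s : ℕ → ℕ), E M γ N n t s →
      (∀ x, ∃ y, E M γ N (n+1) (Function.update t n x) (Function.update s n y)) ∧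
      (∀ y, ∃ x, E M γ N (n+1) (Function.update t n x) (Function.update s n y)))
    {n₀ : ℕ} {t₀ s₀ : ℕ → ℕ} (h₀ : E M γ N n₀ t₀ s₀) :
    ∃ g : Equiv.Perm ℕ, (∀ (r : R) (u : Fin (ar r) → ℕ), N r u ↔ M r (fun i => g (u i))) ∧
      ∀ i, i < n₀ → g (t₀ i) = s₀ i := by
  classical
  have step : ∀ (m n : ℕ) (t s : ℕ → ℕ), E M γ N n t s →
      ∃ p : (ℕ → ℕ) × (ℕ → ℕ), E M γ N (n+2) p.1 p.2 ∧ p.1 n = m ∧ p.2 (n+1) = m ∧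
        (∀ i, i < n → p.1 i = t i ∧ p.2 i = s i) := by
    intro m n t s hE
    obtain ⟨y, hy⟩ := (hbf n t s hE).1 m
    obtain ⟨x, hx⟩ := (hbf (n+1) _ _ hy).2 m
    refine ⟨(Function.update (Function.update t n m) (n+1) x,
             Function.update (Function.update s n y) (n+1) m), hx, ?_, ?_, ?_⟩
    · dsimp only
      rw [Function.update_of_ne (by omega), Function.update_self]
    · dsimp only
      rw [Function.update_self]
    · intro i hi
      constructor
      · dsimp only
        rw [Function.update_of_ne (by omega), Function.update_of_ne (by omega)]
      · dsimp only
        rw [Function.update_of_ne (by omega), Function.update_of_ne (by omega)]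
  choose q hq1 hq2 hq3 hq4 using step
  let F : (m : ℕ) → {p : (ℕ → ℕ) × (ℕ → ℕ) // E M γ N (n₀ + 2*m) p.1 p.2} :=
    Nat.rec ⟨(t₀, s₀), h₀⟩
      (fun m prev => ⟨q m (n₀ + 2*m) prev.1.1 prev.1.2 prev.2,
        hq1 m (n₀ + 2*m) prev.1.1 prev.1.2 prev.2⟩)
  have hFsucc : ∀ m, (F (m+1)).1 = q m (n₀ + 2*m) (F m).1.1 (F m).1.2 (F m).2 := fun m => rfl
  have hF0 : (F 0).1 = (t₀, s₀) := rfl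
  -- agreement of consecutive stages
  have hagree : ∀ m m', m ≤ m' → ∀ i, i < n₀ + 2*m →
      (F m').1.1 i = (F m).1.1 i ∧ (F m').1.2 i = (F m).1.2 i := by
    intro m m' hm
    induction m' with
    | zero =>
      intro i hi
      have hm0 : m = 0 := Nat.le_zero.mp hm
      subst hm0
      exact ⟨rfl, rfl⟩
    | succ k IH =>
      rcases Nat.lt_succ_iff_lt_or_eq.1 (Nat.lt_succ_of_le hm) with hk | rfl
      · intro i hi
        have hk' : m ≤ k := Nat.lt_succ_iff.mp hk
        have h1 := IH hk' i hi
        have h2 := hq4 k (n₀ + 2*k) (F k).1.1 (F k).1.2 (F k).2 i (by omega)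
        rw [hFsucc k]
        exact ⟨h2.1.trans h1.1, h2.2.trans h1.2⟩
      · intro i hi; exact ⟨rfl, rfl⟩
  set T : ℕ → ℕ := fun i => (F (i+1)).1.1 i with hT
  set S : ℕ → ℕ := fun i => (F (i+1)).1.2 i with hS
  have T_eq : ∀ m i, i < n₀ + 2*m → T i = (F m).1.1 i ∧ S i = (F m).1.2 i := by
    intro m i hi
    have h1 := hagree m (max m (i+1)) (le_max_left _ _) i hi
    have h2 := hagree (i+1) (max m (i+1)) (le_max_right _ _) i (by omega)
    exact ⟨h2.1.symm.trans h1.1, h2.2.symm.trans h1.2⟩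
  have E_TS : ∀ m, E M γ N (n₀ + 2*m) T S := by
    intro m
    exact E_congr (fun i hi => ((T_eq m i hi).1).symm) (fun i hi => ((T_eq m i hi).2).symm)
      (F m).2
  have hTp : ∀ p, T (n₀ + 2*p) = p := by
    intro p
    have h2 : (F (p+1)).1.1 (n₀ + 2*p) = p := by
      rw [hFsucc p]; exact hq2 p (n₀ + 2*p) (F p).1.1 (F p).1.2 (F p).2
    have h3 := (T_eq (p+1) (n₀ + 2*p) (by omega)).1
    rw [h3, h2]
  have hSq : ∀ p, S (n₀ + 2*p + 1) = p := by
    intro p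
    have h2 : (F (p+1)).1.2 (n₀ + 2*p + 1) = p := by
      rw [hFsucc p]; exact hq3 p (n₀ + 2*p) (F p).1.1 (F p).1.2 (F p).2
    have h3 := (T_eq (p+1) (n₀ + 2*p + 1) (by omega)).2
    rw [h3, h2]
  have wdT : ∀ i i', T i = T i' → S i = S i' := by
    intro i i' h
    have hmi := le_max_left i i'
    have hmi' := le_max_right i i'
    exact ((E_TS (max i i' + 1)).qf.1 i (by omega) i' (by omega)).mp h
  have wdS : ∀ i i', S i = S i' → T i = T i' := by
    intro i i' h
    have hmi := le_max_left i i'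
    have hmi' := le_max_right i i'
    exact ((E_TS (max i i' + 1)).qf.1 i (by omega) i' (by omega)).mpr h
  refine ⟨⟨fun p => S (n₀ + 2*p), fun q => T (n₀ + 2*q + 1), ?_, ?_⟩, ?_, ?_⟩
  · intro p
    have h1 : S (n₀ + 2*(S (n₀ + 2*p)) + 1) = S (n₀ + 2*p) := hSq _
    exact (wdS _ _ h1).trans (hTp p)
  · intro q
    have h1 : T (n₀ + 2*(T (n₀ + 2*q + 1))) = T (n₀ + 2*q + 1) := hTp _
    exact (wdT _ _ h1).trans (hSq q)
  · intro r u
    have hb : ∀ i, n₀ + 2*(u i) < n₀ + 2*((Finset.univ.sup u) + 1) := by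
      intro i
      have := Finset.le_sup (f := u) (Finset.mem_univ i)
      omega
    have h1 := (E_TS ((Finset.univ.sup u) + 1)).qf.2 r (fun i => n₀ + 2*(u i)) hb
    have h2 : (fun i => T (n₀ + 2*(u i))) = u := funext fun i => hTp (u i)
    rw [h2] at h1
    simpa using h1
  · intro i hi
    simp only [Equiv.coe_fn_mk]
    have h0 := T_eq 0 i (by omega)
    have h1 : T i = t₀ i := h0.1
    have h2 : S i = s₀ i := h0.2
    have h3 : T (n₀ + 2*(t₀ i)) = T i := (hTp _).trans h1.symm
    rw [wdT _ _ h3, h2]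

theorem update_comp (f t : ℕ → ℕ) (n x : ℕ) (i : ℕ) :
    f (Function.update t n x i) = Function.update (fun k => f (t k)) n (f x) i := by
  rcases eq_or_ne i n with rfl | h
  · simp
  · rw [Function.update_of_ne h, Function.update_of_ne h]

/-- the "Scott sentence" set at level `γ` -/
def GSet (M : SL R ar) (γ : Ordinal) : Set (SL R ar) :=
  {N | E M γ N 0 id id ∧ ∀ (n : ℕ) (t s : ℕ → ℕ), E M γ N n t s →
    (∀ x, ∃ y, E M γ N (n+1) (Function.update t n x) (Function.update s n y)) ∧
    (∀ y, ∃ x, E M γ N (n+1) (Function.update t n x) (Function.update s n y))}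

/-- the logic action -/
def act (g : Equiv.Perm ℕ) (N : SL R ar) : SL R ar :=
  fun r t => N r (fun i => g⁻¹ (t i))

theorem act_E {M : SL R ar} (g : Equiv.Perm ℕ) (N : SL R ar) {γ : Ordinal} {n : ℕ}
    {t s : ℕ → ℕ} : E M γ (act g N) n t s ↔ E M γ N n (fun i => g⁻¹ (t i)) s :=
  E_transport_iff g⁻¹ (fun _ _ => Iff.rfl)

theorem act_act (g : Equiv.Perm ℕ) (N : SL R ar) : act g⁻¹ (act g N) = N := by
  funext r t
  show N r (fun i => g⁻¹ ((g⁻¹)⁻¹ (t i))) = N r t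
  exact congrArg (N r) (funext fun i => by simp)

theorem mem_GSet_act {M N : SL R ar} {γ : Ordinal} (g : Equiv.Perm ℕ) (hN : N ∈ GSet M γ) :
    act g N ∈ GSet M γ := by
  obtain ⟨h0, hbf⟩ := hN
  constructor
  · rw [act_E]
    exact E_congr (fun i hi => absurd hi (Nat.not_lt_zero i))
      (fun i hi => absurd hi (Nat.not_lt_zero i)) h0
  · intro n t s hE
    rw [act_E] at hE
    have hcl := hbf n _ s hE
    constructor
    · intro x
      obtain ⟨y, hy⟩ := hcl.1 (g⁻¹ x)
      refine ⟨y, ?_⟩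
      rw [act_E]
      refine E_congr (fun i hi => ?_) (fun i hi => rfl) hy
      rw [update_comp (fun k => g⁻¹ k) t n x i]
    · intro y
      obtain ⟨x', hx⟩ := hcl.2 y
      refine ⟨g x', ?_⟩
      rw [act_E]
      refine E_congr (fun i hi => ?_) (fun i hi => rfl) hx
      rw [update_comp (fun k => g⁻¹ k) t n (g x') i]
      rw [show g⁻¹ (g x') = x' by simp]

theorem mem_GSet_act_iff {M N : SL R ar} {γ : Ordinal} (g : Equiv.Perm ℕ) :
    act g N ∈ GSet M γ ↔ N ∈ GSet M γ := by
  constructor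
  · intro h
    have := mem_GSet_act g⁻¹ h
    rwa [act_act] at this
  · exact mem_GSet_act g

theorem lt_add_one_ord (γ : Ordinal) : γ < γ + 1 := by
  rw [Ordinal.add_one_eq_succ]
  exact Order.lt_succ γ

theorem conc_subset_GSet {M : SL R ar} {γ : Ordinal}
    (hγfix : ∀ (n : ℕ) (t s : ℕ → ℕ), E M γ M n t s → E M (γ+1) M n t s) :
    {N : SL R ar | ∃ g : Equiv.Perm ℕ, ∀ (r : R) (t : Fin (ar r) → ℕ),
      N r t ↔ M r (fun i => g (t i))} ⊆ GSet M γ := by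
  rintro N ⟨g, hg⟩
  have trans : ∀ {γ' : Ordinal} {n : ℕ} {t s : ℕ → ℕ},
      E M γ' N n t s ↔ E M γ' M n (fun i => g (t i)) s :=
    fun {γ' n t s} => E_transport_iff g hg
  constructor
  · rw [trans]
    exact E_congr (fun i hi => absurd hi (Nat.not_lt_zero i))
      (fun i hi => absurd hi (Nat.not_lt_zero i)) (E_refl (t := fun i => g i))
  · intro n t s hE
    have hEM : E M (γ+1) M n (fun i => g (t i)) s := hγfix n _ s (trans.mp hE)
    have hext := hEM.ext (lt_add_one_ord γ)
    constructor
    · intro x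
      obtain ⟨y, hy⟩ := hext.1 (g x)
      refine ⟨y, trans.mpr (E_congr (fun i hi => ?_) (fun i hi => rfl) hy)⟩
      rw [update_comp (fun k => g k) t n x i]
    · intro y
      obtain ⟨x', hx⟩ := hext.2 y
      refine ⟨g.symm x', trans.mpr (E_congr (fun i hi => ?_) (fun i hi => rfl) hx)⟩
      rw [update_comp (fun k => g k) t n (g.symm x') i]
      rw [show g (g.symm x') = x' by simp]

def extf (n : ℕ) (v : Fin n → ℕ) : ℕ → ℕ := fun i => if h : i < n then v ⟨i, h⟩ else 0

theorem extf_lt {n : ℕ} (v : Fin n → ℕ) {i : ℕ} (h : i < n) : extf n v i = v ⟨i, h⟩ :=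
  dif_pos h

theorem GSet_meas [Countable R] (M : SL R ar) {γ : Ordinal} (hγc : (Set.Iio γ).Countable) :
    MeasurableSet[mS R ar] (GSet M γ) := by
  classical
  have hGeq : GSet M γ = {N : SL R ar | E M γ N 0 id id} ∩
      ⋂ (p : (n : ℕ) × ((Fin n → ℕ) × (Fin n → ℕ))),
        ({N : SL R ar | E M γ N p.1 (extf p.1 p.2.1) (extf p.1 p.2.2)}ᶜ ∪
          ((⋂ x, ⋃ y, {N : SL R ar | E M γ N (p.1+1)
              (Function.update (extf p.1 p.2.1) p.1 x)
              (Function.update (extf p.1 p.2.2) p.1 y)}) ∩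
           (⋂ y, ⋃ x, {N : SL R ar | E M γ N (p.1+1)
              (Function.update (extf p.1 p.2.1) p.1 x)
              (Function.update (extf p.1 p.2.2) p.1 y)}))) := by
    ext N
    simp only [GSet, Set.mem_setOf_eq, Set.mem_inter_iff, Set.mem_iInter, Set.mem_union,
      Set.mem_compl_iff, Set.mem_iUnion, Sigma.forall, Prod.forall]
    constructor
    · rintro ⟨h0, hbf⟩
      refine ⟨h0, fun n v v' => ?_⟩
      rcases Classical.em (E M γ N n (extf n v) (extf n v')) with hE | hE
      · exact Or.inr (hbf n _ _ hE)
      · exact Or.inl hE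
    · rintro ⟨h0, hbf⟩
      refine ⟨h0, fun n t s hE => ?_⟩
      have ht : ∀ i, i < n → t i = extf n (fun i => t i) i := by
        intro i hi; rw [extf_lt _ hi]
      have hs : ∀ i, i < n → s i = extf n (fun i => s i) i := by
        intro i hi; rw [extf_lt _ hi]
      have hE' : E M γ N n (extf n (fun i => t i)) (extf n (fun i => s i)) :=
        E_congr ht hs hE
      rcases hbf n (fun i => t i) (fun i => s i) with h | h
      · exact absurd hE' h
      · have back : ∀ (f f' : ℕ → ℕ), (∀ i, i < n → f' i = f i) → ∀ z i, i < n + 1 →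
            Function.update f' n z i = Function.update f n z i := by
          intro f f' hf z i hi
          rcases Nat.lt_succ_iff_lt_or_eq.1 hi with hi | rfl
          · rw [Function.update_of_ne (by omega), Function.update_of_ne (by omega)]
            exact hf i hi
          · rw [Function.update_self, Function.update_self]
        constructor
        · intro x
          obtain ⟨y, hy⟩ := h.1 x
          exact ⟨y, E_congr (back t _ (fun i hi => (ht i hi).symm) x)
            (back s _ (fun i hi => (hs i hi).symm) y) hy⟩
        · intro y
          obtain ⟨x, hx⟩ := h.2 y
          exact ⟨x, E_congr (back t _ (fun i hi => (ht i hi).symm) x)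
            (back s _ (fun i hi => (hs i hi).symm) y) hx⟩
  rw [hGeq]
  refine (E_meas M hγc 0 id id).inter (MeasurableSet.iInter fun p => ?_)
  refine MeasurableSet.union (E_meas M hγc _ _ _).compl ?_
  exact (MeasurableSet.iInter fun x => MeasurableSet.iUnion fun y =>
      E_meas M hγc _ _ _).inter
    (MeasurableSet.iInter fun y => MeasurableSet.iUnion fun x => E_meas M hγc _ _ _)

def aaf (j : ℕ) (a : Fin j → ℕ) (b : ℕ) : ℕ → ℕ := fun i => if h : i < j then a ⟨i, h⟩ else b

theorem aaf_lt {j : ℕ} (a : Fin j → ℕ) (b : ℕ) {i : ℕ} (h : i < j) : aaf j a b i = a ⟨i, h⟩ :=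
  dif_pos h

theorem aaf_ge {j : ℕ} (a : Fin j → ℕ) (b : ℕ) {i : ℕ} (h : ¬ i < j) : aaf j a b i = b :=
  dif_neg h

def tkf (j k : ℕ) : ℕ → ℕ := fun i => if i < j then i else k

theorem tkf_lt {j : ℕ} (k : ℕ) {i : ℕ} (h : i < j) : tkf j k i = i := if_pos h

theorem tkf_ge {j : ℕ} (k : ℕ) {i : ℕ} (h : ¬ i < j) : tkf j k i = k := if_neg h

theorem exists_perm_extend : ∀ (j : ℕ) (w : Fin j → ℕ), Function.Injective w →
    ∃ g : Equiv.Perm ℕ, ∀ i : Fin j, g (i : ℕ) = w i := by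
  intro j
  induction j with
  | zero => exact fun w _ => ⟨1, fun i => i.elim0⟩
  | succ k IH =>
    intro w hw
    obtain ⟨g', hg'⟩ := IH (fun i => w i.castSucc)
      (fun i i' h => Fin.castSucc_injective k (hw h))
    set u := g'.symm (w (Fin.last k)) with hu
    refine ⟨(Equiv.swap (k : ℕ) u).trans g', ?_⟩
    intro i
    by_cases hik : (i : ℕ) < k
    · have hne1 : (i : ℕ) ≠ k := by omega
      have hne2 : (i : ℕ) ≠ u := by
        intro h
        have h1 : g' (i : ℕ) = w (Fin.last k) := by rw [h, hu, Equiv.apply_symm_apply]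
        have h2 := hg' ⟨(i : ℕ), hik⟩
        rw [h2] at h1
        have := hw h1
        have hv := congrArg Fin.val this
        simp at hv
        omega
      simp only [Equiv.trans_apply, Equiv.swap_apply_of_ne_of_ne hne1 hne2]
      have h2 := hg' ⟨(i : ℕ), hik⟩
      rw [h2]
      congr 1
    · have hik2 : (i : ℕ) = k := by omega
      have hil : i = Fin.last k := Fin.ext hik2
      subst hil
      simp only [Equiv.trans_apply, Fin.val_last, Equiv.swap_apply_left, hu,
        Equiv.apply_symm_apply]

end Stmt17


/-- Let M be a countably infinite structure (modelled concretely as a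
structure on ℕ in a countable relational language: symbols `r : R`, arities
`ar r`) with an element b and a finite tuple a of distinct entries, b not among
them, such that b is fixed by every automorphism of M fixing a pointwise
(b ∈ dcl(a) \ a).  Then no Sym(ℕ)-invariant probability measure on the space S_L
of structures on ℕ (with the σ-algebra generated by the basic relational events,
and the logic action of Sym(ℕ)) can be concentrated on the isomorphism class of
M. -/
theorem stmt17 (R : Type) [Countable R] (ar : R → ℕ)
    (M : ∀ r : R, (Fin (ar r) → ℕ) → Prop)
    (j : ℕ) (a : Fin j → ℕ) (ha : Function.Injective a)
    (b : ℕ) (hb : ∀ i, b ≠ a i)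
    (hdcl : ∀ g : Equiv.Perm ℕ,
      (∀ (r : R) (t : Fin (ar r) → ℕ), M r (fun i => g (t i)) ↔ M r t) →
      (∀ i, g (a i) = a i) → g b = b) :
    letI 𝓢 : MeasurableSpace (∀ r : R, (Fin (ar r) → ℕ) → Prop) :=
      MeasurableSpace.generateFrom
        {s : Set (∀ r : R, (Fin (ar r) → ℕ) → Prop) |
          ∃ (r : R) (t : Fin (ar r) → ℕ),
            s = {N : ∀ r : R, (Fin (ar r) → ℕ) → Prop | N r t}}
    ¬ ∃ μ : Measure (∀ r : R, (Fin (ar r) → ℕ) → Prop),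
        IsProbabilityMeasure μ ∧
        (∀ (g : Equiv.Perm ℕ) (X : Set (∀ r : R, (Fin (ar r) → ℕ) → Prop)),
          MeasurableSet X →
          μ ((fun (N : ∀ r : R, (Fin (ar r) → ℕ) → Prop) (r : R) (t : Fin (ar r) → ℕ) =>
                N r (fun i => g⁻¹ (t i))) ⁻¹' X) = μ X) ∧
        μ {N : ∀ r : R, (Fin (ar r) → ℕ) → Prop |
            ∃ g : Equiv.Perm ℕ, ∀ (r : R) (t : Fin (ar r) → ℕ),
              N r t ↔ M r (fun i => g (t i))} = 1 := by
  classical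
  rintro ⟨μ, hprob, hinv, hconc⟩
  haveI := hprob
  obtain ⟨γ, hγc, hγfix⟩ := Stmt17.exists_gammaStar.{0} (ar := ar) M
  set A : (ℕ → ℕ) → Set (Stmt17.SL R ar) :=
    fun t => Stmt17.GSet M γ ∩ {N | Stmt17.E M γ N j t (Stmt17.aaf j a b)} with hAdef
  set B : ℕ → Set (Stmt17.SL R ar) :=
    fun k => Stmt17.GSet M γ ∩ {N | Stmt17.E M γ N (j+1) (Stmt17.tkf j k) (Stmt17.aaf j a b)} with hBdef
  have hGmeas : MeasurableSet[Stmt17.mS R ar] (Stmt17.GSet M γ) := Stmt17.GSet_meas M hγc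
  have hAmeas : ∀ t, MeasurableSet[Stmt17.mS R ar] (A t) :=
    fun t => hGmeas.inter (Stmt17.E_meas M hγc j t (Stmt17.aaf j a b))
  have hBmeas : ∀ k, MeasurableSet[Stmt17.mS R ar] (B k) :=
    fun k => hGmeas.inter (Stmt17.E_meas M hγc (j+1) (Stmt17.tkf j k) (Stmt17.aaf j a b))
  -- μ G = 1
  have hG1 : μ (Stmt17.GSet M γ) = 1 := by
    have h1 := measure_mono (μ := μ) (Stmt17.conc_subset_GSet hγfix)
    rw [hconc] at h1
    exact le_antisymm prob_le_one h1
  -- covering by A-sets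
  have hGsub : Stmt17.GSet M γ ⊆ ⋃ w : Fin j → ℕ, A (Stmt17.extf j w) := by
    intro N hN
    obtain ⟨g, hgiso, -⟩ := Stmt17.dovetail M N γ hN.2 hN.1
    refine Set.mem_iUnion.2 ⟨fun i => g.symm (a i), hN, ?_⟩
    show Stmt17.E M γ N j (Stmt17.extf j (fun i => g.symm (a i))) (Stmt17.aaf j a b)
    rw [Stmt17.E_transport_iff g hgiso]
    refine Stmt17.E_congr (fun i hi => ?_) (fun i hi => rfl) (Stmt17.E_refl (t := (Stmt17.aaf j a b)))
    show (Stmt17.aaf j a b) i = g (Stmt17.extf j (fun i => g.symm (a i)) i)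
    rw [Stmt17.extf_lt _ hi, Equiv.apply_symm_apply]
    exact Stmt17.aaf_lt a b hi
  -- some A-set has positive measure, with injective tuple
  have hApos : μ (A id) ≠ 0 := by
    have hcov : μ (Stmt17.GSet M γ) ≤ ∑' w : Fin j → ℕ, μ (A (Stmt17.extf j w)) :=
      le_trans (measure_mono hGsub) (measure_iUnion_le _)
    have hex : ∃ w : Fin j → ℕ, μ (A (Stmt17.extf j w)) ≠ 0 := by
      by_contra hno
      push_neg at hno
      rw [hG1] at hcov
      simp only [hno, tsum_zero] at hcov
      exact (by norm_num : ¬ (1 : ENNReal) ≤ 0) hcov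
    obtain ⟨w, hw⟩ := hex
    have hne : (A (Stmt17.extf j w)).Nonempty := by
      rcases Set.eq_empty_or_nonempty (A (Stmt17.extf j w)) with h | h
      · rw [h, measure_empty] at hw; exact absurd rfl hw
      · exact h
    obtain ⟨N₀, hN₀⟩ := hne
    have hwinj : Function.Injective w := by
      intro i i' he
      have hp := (Stmt17.E.qf hN₀.2).1 (i : ℕ) i.isLt (i' : ℕ) i'.isLt
      have h2 : Stmt17.aaf j a b (i : ℕ) = Stmt17.aaf j a b (i' : ℕ) := by
        apply hp.mp
        rw [Stmt17.extf_lt _ i.isLt, Stmt17.extf_lt _ i'.isLt]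
        rw [Fin.eta, Fin.eta]
        exact he
      rw [Stmt17.aaf_lt a b i.isLt, Stmt17.aaf_lt a b i'.isLt, Fin.eta, Fin.eta] at h2
      exact ha h2
    obtain ⟨g₀, hg₀⟩ := Stmt17.exists_perm_extend j w hwinj
    have hkey := hinv g₀ (A (Stmt17.extf j w)) (hAmeas _)
    have hseteq : (fun (N : Stmt17.SL R ar) (r : R) (t : Fin (ar r) → ℕ) =>
        N r (fun i => g₀⁻¹ (t i))) ⁻¹' (A (Stmt17.extf j w)) = A id := by
      ext N
      show Stmt17.act g₀ N ∈ A (Stmt17.extf j w) ↔ N ∈ A id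
      constructor
      · rintro ⟨h1, h2⟩
        refine ⟨(Stmt17.mem_GSet_act_iff g₀).mp h1, ?_⟩
        have h3 := (Stmt17.act_E g₀ N).mp h2
        refine Stmt17.E_congr (fun i hi => ?_) (fun i hi => rfl) h3
        show g₀⁻¹ (Stmt17.extf j w i) = id i
        rw [Stmt17.extf_lt _ hi, ← hg₀ ⟨i, hi⟩]
        simp
      · rintro ⟨h1, h2⟩
        refine ⟨(Stmt17.mem_GSet_act_iff g₀).mpr h1, ?_⟩
        show Stmt17.E M γ (Stmt17.act g₀ N) j (Stmt17.extf j w) (Stmt17.aaf j a b)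
        rw [Stmt17.act_E g₀ N]
        refine Stmt17.E_congr (fun i hi => ?_) (fun i hi => rfl) h2
        show (id i : ℕ) = g₀⁻¹ (Stmt17.extf j w i)
        rw [Stmt17.extf_lt _ hi, ← hg₀ ⟨i, hi⟩]
        simp
    rw [hseteq] at hkey
    rw [← hkey] at hw
    exact hw
  -- decomposition
  have hdecomp : A id = ⋃ m : ℕ, B (j+m) := by
    ext N
    simp only [Set.mem_iUnion]
    constructor
    · rintro ⟨hNG, hNE⟩
      obtain ⟨k, hk⟩ := (hNG.2 j id (Stmt17.aaf j a b) hNE).2 b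
      have hE2 : Stmt17.E M γ N (j+1) (Stmt17.tkf j k) (Stmt17.aaf j a b) := by
        refine Stmt17.E_congr (fun i hi => ?_) (fun i hi => ?_) hk
        · rcases Nat.lt_succ_iff_lt_or_eq.1 hi with hi | rfl
          · rw [Function.update_of_ne (by omega), Stmt17.tkf_lt k hi]; rfl
          · rw [Function.update_self, Stmt17.tkf_ge k (lt_irrefl _)]
        · rcases Nat.lt_succ_iff_lt_or_eq.1 hi with hi | rfl
          · rw [Function.update_of_ne (by omega)]
          · rw [Function.update_self, Stmt17.aaf_ge a b (lt_irrefl _)]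
      have hkj : j ≤ k := by
        by_contra hkj
        push_neg at hkj
        have hp := (Stmt17.E.qf hE2).1 k (by omega) j (by omega)
        have h2 : Stmt17.aaf j a b k = Stmt17.aaf j a b j := by
          apply hp.mp
          rw [Stmt17.tkf_lt k hkj, Stmt17.tkf_ge k (lt_irrefl j)]
        rw [Stmt17.aaf_lt a b hkj, Stmt17.aaf_ge a b (lt_irrefl j)] at h2
        exact hb ⟨k, hkj⟩ h2.symm
      exact ⟨k - j, by rw [show j + (k-j) = k by omega]; exact ⟨hNG, hE2⟩⟩
    · rintro ⟨m, hmG, hmE⟩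
      refine ⟨hmG, ?_⟩
      have h3 := Stmt17.E_reindex (σ := id)
        (fun i hi => (by simpa using Nat.lt_succ_of_lt hi : id i < j + 1)) hmE
      show Stmt17.E M γ N j id (Stmt17.aaf j a b)
      refine Stmt17.E_congr (fun i hi => ?_) (fun i hi => rfl) h3
      show Stmt17.tkf j (j+m) (id i) = id i
      exact Stmt17.tkf_lt _ hi
  -- disjointness
  have hdisj : Pairwise (Function.onFun Disjoint fun m => B (j+m)) := by
    intro m m' hne
    simp only [Function.onFun]
    rw [Set.disjoint_left]
    intro N hNm hNm'
    obtain ⟨g, hgiso, hgmap⟩ := Stmt17.dovetail M N γ hNm.1.2 hNm.2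
    obtain ⟨g', hg'iso, hg'map⟩ := Stmt17.dovetail M N γ hNm.1.2 hNm'.2
    have hga : ∀ i (hi : i < j), g i = a ⟨i, hi⟩ := by
      intro i hi
      have h1 := hgmap i (by omega)
      rwa [Stmt17.tkf_lt _ hi, Stmt17.aaf_lt a b hi] at h1
    have hg'a : ∀ i (hi : i < j), g' i = a ⟨i, hi⟩ := by
      intro i hi
      have h1 := hg'map i (by omega)
      rwa [Stmt17.tkf_lt _ hi, Stmt17.aaf_lt a b hi] at h1
    have hgb : g (j+m) = b := by
      have h1 := hgmap j (by omega)
      rwa [Stmt17.tkf_ge _ (lt_irrefl j), Stmt17.aaf_ge a b (lt_irrefl j)] at h1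
    have hg'b : g' (j+m') = b := by
      have h1 := hg'map j (by omega)
      rwa [Stmt17.tkf_ge _ (lt_irrefl j), Stmt17.aaf_ge a b (lt_irrefl j)] at h1
    have hauto : ∀ (r : R) (t : Fin (ar r) → ℕ),
        M r (fun i => (g.symm.trans g') (t i)) ↔ M r t := by
      intro r t
      have h1 := hgiso r (fun i => g.symm (t i))
      have h2 := hg'iso r (fun i => g.symm (t i))
      rw [show (fun i => g (g.symm (t i))) = t from funext fun i => g.apply_symm_apply (t i)]
        at h1
      exact h2.symm.trans h1
    have hfix : ∀ i, (g.symm.trans g') (a i) = a i := by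
      intro i
      have h1 : g.symm (a i) = (i : ℕ) := by
        rw [Equiv.symm_apply_eq, hga (i : ℕ) i.isLt]
      show g' (g.symm (a i)) = a i
      rw [h1, hg'a (i : ℕ) i.isLt]
    have hbb := hdcl (g.symm.trans g') hauto hfix
    have h3 : g.symm b = j + m := by rw [Equiv.symm_apply_eq, hgb]
    have h4 : g' (j+m) = b := by
      have h5 : g' (g.symm b) = b := hbb
      rwa [h3] at h5
    have h6 : j + m = j + m' := g'.injective (h4.trans hg'b.symm)
    exact hne (by omega)
  -- equal measures of the B sets
  have hBinv : ∀ m : ℕ, μ (B (j+m)) = μ (B j) := by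
    intro m
    have hkey := hinv (Equiv.swap j (j+m)) (B j) (hBmeas j)
    have hseteq : (fun (N : Stmt17.SL R ar) (r : R) (t : Fin (ar r) → ℕ) =>
        N r (fun i => (Equiv.swap j (j+m))⁻¹ (t i))) ⁻¹' (B j) = B (j+m) := by
      ext N
      show Stmt17.act (Equiv.swap j (j+m)) N ∈ B j ↔ N ∈ B (j+m)
      have hpt : ∀ i, i < j + 1 →
          (Equiv.swap j (j+m))⁻¹ (Stmt17.tkf j j i) = Stmt17.tkf j (j+m) i := by
        intro i hi
        rw [Equiv.swap_inv]
        rcases Nat.lt_succ_iff_lt_or_eq.1 hi with hi | rfl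
        · rw [Stmt17.tkf_lt _ hi, Equiv.swap_apply_of_ne_of_ne (by omega) (by omega),
            Stmt17.tkf_lt _ hi]
        · rw [Stmt17.tkf_ge _ (lt_irrefl _), Equiv.swap_apply_left,
            Stmt17.tkf_ge _ (lt_irrefl _)]
      constructor
      · rintro ⟨h1, h2⟩
        refine ⟨(Stmt17.mem_GSet_act_iff _).mp h1, ?_⟩
        have h3 := (Stmt17.act_E _ N).mp h2
        exact Stmt17.E_congr (fun i hi => hpt i hi) (fun i hi => rfl) h3
      · rintro ⟨h1, h2⟩
        refine ⟨(Stmt17.mem_GSet_act_iff _).mpr h1, ?_⟩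
        show Stmt17.E M γ (Stmt17.act (Equiv.swap j (j+m)) N) (j+1) (Stmt17.tkf j j) (Stmt17.aaf j a b)
        rw [Stmt17.act_E]
        exact Stmt17.E_congr (fun i hi => (hpt i hi).symm) (fun i hi => rfl) h2
    rw [hseteq] at hkey
    exact hkey
  have hAeq : μ (A id) = ∑' m : ℕ, μ (B (j+m)) := by
    rw [hdecomp]
    exact measure_iUnion hdisj (fun m => hBmeas _)
  rcases eq_or_ne (μ (B j)) 0 with h0 | h0
  · refine hApos ?_
    rw [hAeq]
    simp only [hBinv, h0, tsum_zero]
  · have htop : (∑' _ : ℕ, μ (B j)) = ⊤ := ENNReal.tsum_const_eq_top_of_ne_zero h0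
    have hAt : μ (A id) = ⊤ := by
      rw [hAeq]
      simp only [hBinv]
      exact htop
    exact absurd hAt (measure_ne_top μ _)
end
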